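/- (Cover's lemma.) Fix n ≥ 1 and let φ : {−1,+1}^n → ℝ be stable. Then there exists a randomized binary prediction algorithm A with μ_A(y) = φ(y) for every y ∈ {−1,+1}^n if and only if the average of φ over all 2^n sequences equals 1/2, i.e. E_ε φ(ε) = 1/2 for ε uniform on {−1,+1}^n. -/

import Mathlib

open Finset

noncomputable section

/-- The real ±1 value of a Boolean bit (`true ↦ +1`, `false ↦ -1`). -/
def sgn (b : Bool) : ℝ := if b then 1 else -1

/-- The history (prefix) of the sequence `y` strictly before time `t`. -/
def pref {n : ℕ} (y : Fin n → Bool) (t : Fin n) : Fin t.1 → Bool :=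
  fun s => y ⟨s.1, s.2.trans t.2⟩

/-- Expected proportion of mistakes `μ_A(y)` of the randomized algorithm whose prediction at
round `t` is a ±1 random variable with mean `q t (pref y t) ∈ [-1,1]`. -/
def mistakes (n : ℕ) (q : (t : Fin n) → (Fin t.1 → Bool) → ℝ) (y : Fin n → Bool) : ℝ :=
  (1 / n) * ∑ t : Fin n, (1 - sgn (y t) * q t (pref y t)) / 2

/-- Expectation of `φ` under the uniform distribution on `{−1,+1}^n`
(sign sequences encoded as Boolean sequences). -/
def unifExp (n : ℕ) (φ : (Fin n → Bool) → ℝ) : ℝ :=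
  (∑ y : Fin n → Bool, φ y) / 2 ^ n

/-- `φ` is stable: flipping any single coordinate changes its value by at most `1/n`. -/
def Stable (n : ℕ) (φ : (Fin n → Bool) → ℝ) : Prop :=
  ∀ (y : Fin n → Bool) (t : Fin n),
    |φ (Function.update y t true) - φ (Function.update y t false)| ≤ 1 / n

/-! ### Auxiliary machinery -/

/-- The set of sequences agreeing with `y` on all coordinates `< k`. -/
def pSet (n k : ℕ) (y : Fin n → Bool) : Finset (Fin n → Bool) :=
  Finset.univ.filter fun z => ∀ s : Fin n, (s : ℕ) < k → z s = y s

/-- The sum of `φ` over `pSet n k y`. -/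
def pSum (n k : ℕ) (φ : (Fin n → Bool) → ℝ) (y : Fin n → Bool) : ℝ :=
  ∑ z ∈ pSet n k y, φ z

lemma mem_pSet {n k : ℕ} {y z : Fin n → Bool} :
    z ∈ pSet n k y ↔ ∀ s : Fin n, (s : ℕ) < k → z s = y s := by
  simp [pSet]

lemma pSet_congr {n k : ℕ} {y y' : Fin n → Bool}
    (h : ∀ s : Fin n, (s : ℕ) < k → y s = y' s) : pSet n k y = pSet n k y' := by
  ext z
  simp only [mem_pSet]
  exact ⟨fun hz s hs => (hz s hs).trans (h s hs), fun hz s hs => (hz s hs).trans (h s hs).symm⟩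

lemma pSum_congr {n k : ℕ} (φ : (Fin n → Bool) → ℝ) {y y' : Fin n → Bool}
    (h : ∀ s : Fin n, (s : ℕ) < k → y s = y' s) : pSum n k φ y = pSum n k φ y' := by
  rw [pSum, pSum, pSet_congr h]

lemma pSet_top {n k : ℕ} (hk : n ≤ k) (y : Fin n → Bool) : pSet n k y = {y} := by
  ext z
  simp only [mem_pSet, Finset.mem_singleton]
  constructor
  · intro h; funext s; exact h s (lt_of_lt_of_le s.2 hk)
  · rintro rfl; intro s _; rfl

lemma pSum_top {n : ℕ} (φ : (Fin n → Bool) → ℝ) (y : Fin n → Bool) :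
    pSum n n φ y = φ y := by
  rw [pSum, pSet_top le_rfl, Finset.sum_singleton]

lemma pSum_zero {n : ℕ} (φ : (Fin n → Bool) → ℝ) (y : Fin n → Bool) :
    pSum n 0 φ y = ∑ z : Fin n → Bool, φ z := by
  rw [pSum]
  congr 1
  ext z; simp [mem_pSet]

lemma pSet_succ {n : ℕ} (t : Fin n) (y : Fin n → Bool) (b : Bool) :
    pSet n (t.1 + 1) (Function.update y t b) =
      (pSet n t.1 y).filter (fun z => z t = b) := by
  ext z
  simp only [mem_pSet, Finset.mem_filter]
  constructor
  · intro h
    refine ⟨fun s hs => ?_, ?_⟩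
    · rw [h s (by omega), Function.update_of_ne (fun he => by subst he; omega)]
    · rw [h t (by omega), Function.update_self]
  · rintro ⟨h1, h2⟩ s hs
    rcases Nat.lt_or_ge (s : ℕ) t.1 with hlt | hge
    · rw [h1 s hlt, Function.update_of_ne (fun he => by subst he; omega)]
    · have : s = t := Fin.ext (by omega)
      subst this
      rw [h2, Function.update_self]

lemma pSum_split {n : ℕ} (φ : (Fin n → Bool) → ℝ) (t : Fin n) (y : Fin n → Bool) :
    pSum n t.1 φ y =
      pSum n (t.1 + 1) φ (Function.update y t true) +
      pSum n (t.1 + 1) φ (Function.update y t false) := by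
  rw [pSum, pSum, pSum, pSet_succ, pSet_succ]
  rw [← Finset.sum_filter_add_sum_filter_not (pSet n t.1 y) (fun z => z t = true) φ]
  congr 1
  apply Finset.sum_congr _ (fun _ _ => rfl)
  apply Finset.filter_congr
  intro z _
  simp

lemma card_pSet {n k : ℕ} (hk : k ≤ n) (y : Fin n → Bool) :
    (pSet n k y).card = 2 ^ (n - k) := by
  have : (Finset.univ : Finset (Fin (n - k) → Bool)).card = 2 ^ (n - k) := by
    simp [Fintype.card_fun]
  rw [← this]
  refine Finset.card_bij'
    (fun z _ => fun i : Fin (n - k) => z ⟨k + i.1, by omega⟩)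
    (fun w _ => fun s : Fin n => if hs : s.1 < k then y s else w ⟨s.1 - k, by omega⟩)
    ?_ ?_ ?_ ?_
  · intro z hz
    exact Finset.mem_univ _
  · intro w _
    rw [mem_pSet]
    intro s hs
    rw [dif_pos hs]
  · intro z hz
    funext s
    rcases Nat.lt_or_ge s.1 k with hs | hs
    · dsimp only
      rw [dif_pos hs]
      exact ((mem_pSet.1 hz) s hs).symm
    · dsimp only
      rw [dif_neg (Nat.not_lt.2 hs)]
      congr 1
      exact Fin.ext (by simp only [Fin.val_mk]; omega)
  · intro w _
    funext i
    have h1 : ¬ (k + i.1 < k) := by omega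
    dsimp only
    rw [dif_neg h1]
    congr 1
    exact Fin.ext (by simp only [Fin.val_mk]; omega)

lemma pSum_diff_bound {n : ℕ} (φ : (Fin n → Bool) → ℝ) (hφ : Stable n φ)
    (t : Fin n) (y : Fin n → Bool) :
    |pSum n (t.1 + 1) φ (Function.update y t true) -
     pSum n (t.1 + 1) φ (Function.update y t false)| ≤ (2 ^ (n - t.1 - 1) : ℝ) / n := by
  have hsum : pSum n (t.1 + 1) φ (Function.update y t false) =
      ∑ z ∈ pSet n (t.1 + 1) (Function.update y t true), φ (Function.update z t false) := by
    rw [pSum]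
    refine Finset.sum_bij' (fun z _ => Function.update z t true)
      (fun z _ => Function.update z t false) ?_ ?_ ?_ ?_ ?_
    · intro z hz
      rw [mem_pSet] at hz ⊢
      intro s hs
      rcases Nat.lt_or_ge s.1 t.1 with h | h
      · have hst : s ≠ t := fun he => by subst he; omega
        rw [Function.update_of_ne hst, Function.update_of_ne hst, hz s hs,
          Function.update_of_ne hst]
      · have : s = t := Fin.ext (by omega)
        subst this
        simp
    · intro z hz
      rw [mem_pSet] at hz ⊢
      intro s hs
      rcases Nat.lt_or_ge s.1 t.1 with h | h
      · have hst : s ≠ t := fun he => by subst he; omega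
        rw [Function.update_of_ne hst, Function.update_of_ne hst, hz s hs,
          Function.update_of_ne hst]
      · have : s = t := Fin.ext (by omega)
        subst this
        simp
    · intro z hz
      have hzt : z t = false := by
        have := (mem_pSet.1 hz) t (by omega)
        simpa using this
      rw [Function.update_idem, ← hzt, Function.update_eq_self]
    · intro z hz
      have hzt : z t = true := by
        have := (mem_pSet.1 hz) t (by omega)
        simpa using this
      rw [Function.update_idem, ← hzt, Function.update_eq_self]
    · intro z hz
      have hzt : z t = false := by
        have := (mem_pSet.1 hz) t (by omega)
        simpa using this
      rw [Function.update_idem, ← hzt, Function.update_eq_self]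
  rw [hsum, pSum, ← Finset.sum_sub_distrib]
  calc |∑ z ∈ pSet n (t.1 + 1) (Function.update y t true), (φ z - φ (Function.update z t false))|
      ≤ ∑ z ∈ pSet n (t.1 + 1) (Function.update y t true), |φ z - φ (Function.update z t false)| :=
        Finset.abs_sum_le_sum_abs _ _
    _ ≤ ∑ _z ∈ pSet n (t.1 + 1) (Function.update y t true), (1 / n : ℝ) := by
        apply Finset.sum_le_sum
        intro z hz
        have hzt : z t = true := by
          have := (mem_pSet.1 hz) t (by omega)
          simpa using this
        have : φ z = φ (Function.update z t true) := by
          rw [← hzt, Function.update_eq_self]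
        rw [this]
        exact hφ z t
    _ = (2 ^ (n - t.1 - 1) : ℝ) / n := by
        rw [Finset.sum_const, card_pSet (by omega)]
        have : n - (t.1 + 1) = n - t.1 - 1 := by omega
        rw [this]
        ring

lemma sgn_mul_diff {n : ℕ} (φ : (Fin n → Bool) → ℝ) (t : Fin n) (y : Fin n → Bool) :
    sgn (y t) * (pSum n (t.1 + 1) φ (Function.update y t true) -
        pSum n (t.1 + 1) φ (Function.update y t false)) =
      2 * pSum n (t.1 + 1) φ y - pSum n t.1 φ y := by
  have hsplit := pSum_split φ t y
  cases h : y t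
  · have hy : Function.update y t false = y := by rw [← h, Function.update_eq_self]
    rw [hy] at hsplit ⊢
    rw [hsplit]
    simp [sgn]
    ring
  · have hy : Function.update y t true = y := by rw [← h, Function.update_eq_self]
    rw [hy] at hsplit ⊢
    rw [hsplit]
    simp [sgn]
    ring

/-- Extend a history `h` of length `t` to a full sequence, filling later slots with `b`. -/
def extb {n : ℕ} (t : Fin n) (h : Fin t.1 → Bool) (b : Bool) : Fin n → Bool :=
  fun s => if hs : s.1 < t.1 then h ⟨s.1, hs⟩ else b

lemma pSum_extb {n : ℕ} (φ : (Fin n → Bool) → ℝ) (t : Fin n) (h : Fin t.1 → Bool)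
    (y : Fin n → Bool) (b : Bool)
    (hh : ∀ (s : Fin n) (hs : s.1 < t.1), h ⟨s.1, hs⟩ = y s) :
    pSum n (t.1 + 1) φ (extb t h b) = pSum n (t.1 + 1) φ (Function.update y t b) := by
  apply pSum_congr
  intro s hs
  rcases Nat.lt_or_ge s.1 t.1 with hlt | hge
  · rw [Function.update_of_ne (fun he => by subst he; omega)]
    show (if hs : s.1 < t.1 then h ⟨s.1, hs⟩ else b) = y s
    rw [dif_pos hlt]
    exact hh s hlt
  · have : s = t := Fin.ext (by omega)
    subst this
    show (if hs : s.1 < s.1 then h ⟨s.1, hs⟩ else b) = _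
    rw [dif_neg (by omega), Function.update_self]

lemma sgn_not (b : Bool) : sgn (!b) = - sgn b := by cases b <;> simp [sgn]

lemma pref_update {n : ℕ} (y : Fin n → Bool) (t : Fin n) (b : Bool) :
    pref (Function.update y t b) t = pref y t := by
  funext s
  show Function.update y t b ⟨s.1, _⟩ = y ⟨s.1, _⟩
  exact Function.update_of_ne (fun he => by
    have : s.1 = t.1 := congrArg Fin.val he
    omega) _ _

/-- Cover's lemma: for stable `φ`, there is a randomized binary prediction
algorithm achieving `μ_A(y) = φ(y)` for every sequence `y` iff `E_ε φ(ε) = 1/2`. -/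
theorem cover_lemma (n : ℕ) (hn : 1 ≤ n) (φ : (Fin n → Bool) → ℝ) (hφ : Stable n φ) :
    (∃ q : (t : Fin n) → (Fin t.1 → Bool) → ℝ,
      (∀ (t : Fin n) (h : Fin t.1 → Bool), |q t h| ≤ 1) ∧
      ∀ y : Fin n → Bool, mistakes n q y = φ y) ↔ unifExp n φ = 1 / 2 := by
  have hn0 : (n : ℝ) ≠ 0 := by positivity
  have h2n : (2 : ℝ) ^ n ≠ 0 := by positivity
  constructor
  · rintro ⟨q, hb, hm⟩
    have hzero : ∀ t : Fin n, ∑ y : Fin n → Bool, sgn (y t) * q t (pref y t) = 0 := by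
      intro t
      apply Finset.sum_ninvolution (g := fun y => Function.update y t (!(y t)))
      · intro y
        rw [pref_update, Function.update_self, sgn_not]
        ring
      · intro y _ he
        have := congrFun he t
        rw [Function.update_self] at this
        exact Bool.not_ne_self (y t) this
      · intro y; exact Finset.mem_univ _
      · intro y
        rw [Function.update_idem, Function.update_self, Bool.not_not, Function.update_eq_self]
    have hsum : ∑ y : Fin n → Bool, φ y = 2 ^ n * (1 / 2 : ℝ) := by
      have step : ∀ y : Fin n → Bool,
          mistakes n q y = (1 / n : ℝ) * ((n : ℝ) * (1 / 2) -
            (1 / 2) * ∑ t : Fin n, sgn (y t) * q t (pref y t)) := by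
        intro y
        rw [mistakes]
        congr 1
        have e1 : ∀ t : Fin n, (1 - sgn (y t) * q t (pref y t)) / 2 =
            1 / 2 - 1 / 2 * (sgn (y t) * q t (pref y t)) := fun t => by ring
        rw [Finset.sum_congr rfl fun t _ => e1 t, Finset.sum_sub_distrib,
          Finset.sum_const, Finset.card_univ, Fintype.card_fin, nsmul_eq_mul,
          ← Finset.mul_sum]
      calc ∑ y : Fin n → Bool, φ y = ∑ y : Fin n → Bool, mistakes n q y := by
            exact (Finset.sum_congr rfl fun y _ => (hm y).symm)
        _ = ∑ y : Fin n → Bool, (1 / n : ℝ) * ((n : ℝ) * (1 / 2) -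
              (1 / 2) * ∑ t : Fin n, sgn (y t) * q t (pref y t)) := by
            exact Finset.sum_congr rfl fun y _ => step y
        _ = 2 ^ n * (1 / 2 : ℝ) := by
            have swapped : ∑ y : Fin n → Bool,
                (1 / 2 : ℝ) * ∑ t : Fin n, sgn (y t) * q t (pref y t) = 0 := by
              have e2 : ∀ y : Fin n → Bool,
                  (1 / 2 : ℝ) * ∑ t : Fin n, sgn (y t) * q t (pref y t)
                  = ∑ t : Fin n, (1 / 2 : ℝ) * (sgn (y t) * q t (pref y t)) :=
                fun y => Finset.mul_sum _ _ _
              rw [Finset.sum_congr rfl fun y _ => e2 y, Finset.sum_comm]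
              apply Finset.sum_eq_zero
              intro t _
              rw [← Finset.mul_sum, hzero t, mul_zero]
            rw [← Finset.mul_sum, Finset.sum_sub_distrib, swapped, sub_zero,
              Finset.sum_const, Finset.card_univ, Fintype.card_fun,
              Fintype.card_bool, Fintype.card_fin, nsmul_eq_mul]
            push_cast
            field_simp
    rw [unifExp, hsum]
    field_simp
  · intro havg
    refine ⟨fun t h => -(n : ℝ) * (pSum n (t.1 + 1) φ (extb t h true) -
        pSum n (t.1 + 1) φ (extb t h false)) / 2 ^ (n - t.1 - 1), ?_, ?_⟩
    · intro t h
      beta_reduce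
      have hApos : (0 : ℝ) < 2 ^ (n - t.1 - 1) := by positivity
      have hrw : ∀ b, pSum n (t.1 + 1) φ (extb t h b) =
          pSum n (t.1 + 1) φ (Function.update (extb t h false) t b) := by
        intro b
        apply pSum_extb
        intro s hs
        show _ = (if hs' : s.1 < t.1 then h ⟨s.1, hs'⟩ else false)
        rw [dif_pos hs]
      rw [hrw true, hrw false, abs_div, abs_of_pos hApos, div_le_one hApos, abs_mul,
        abs_neg, abs_of_nonneg (by positivity : (0:ℝ) ≤ (n:ℝ))]
      have hbd := pSum_diff_bound φ hφ t (extb t h false)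
      calc (n : ℝ) * |pSum n (t.1 + 1) φ (Function.update (extb t h false) t true) -
            pSum n (t.1 + 1) φ (Function.update (extb t h false) t false)|
          ≤ (n : ℝ) * ((2 ^ (n - t.1 - 1) : ℝ) / n) := by
            apply mul_le_mul_of_nonneg_left hbd (by positivity)
        _ = 2 ^ (n - t.1 - 1) := by field_simp
    · intro y
      set f : ℕ → ℝ := fun k => pSum n k φ y * 2 ^ k / 2 ^ n with hf
      have hterm : ∀ t : Fin n,
          (1 - sgn (y t) * (-(n : ℝ) * (pSum n (t.1 + 1) φ (extb t (pref y t) true) -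
            pSum n (t.1 + 1) φ (extb t (pref y t) false)) / 2 ^ (n - t.1 - 1))) / 2 =
          1 / 2 + (n : ℝ) * (f (t.1 + 1) - f t.1) := by
        intro t
        have hpref : ∀ b, pSum n (t.1 + 1) φ (extb t (pref y t) b) =
            pSum n (t.1 + 1) φ (Function.update y t b) := by
          intro b
          apply pSum_extb
          intro s hs
          show y ⟨s.1, _⟩ = y s
          rfl
        rw [hpref true, hpref false]
        have hd := sgn_mul_diff φ t y
        have hA : (2 : ℝ) ^ (n - t.1 - 1) * 2 ^ (t.1 + 1) = 2 ^ n := by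
          rw [← pow_add]
          congr 1
          omega
        have hApos : (0 : ℝ) < 2 ^ (n - t.1 - 1) := by positivity
        have step1 : (1 - sgn (y t) * (-(n : ℝ) * (pSum n (t.1 + 1) φ (Function.update y t true) -
            pSum n (t.1 + 1) φ (Function.update y t false)) / 2 ^ (n - t.1 - 1))) / 2 =
            1 / 2 + ((n : ℝ) / (2 * 2 ^ (n - t.1 - 1))) *
              (sgn (y t) * (pSum n (t.1 + 1) φ (Function.update y t true) -
                pSum n (t.1 + 1) φ (Function.update y t false))) := by
          field_simp
          ring
        rw [step1, hd, hf]
        have h2t : (2 : ℝ) ^ (t.1 + 1) ≠ 0 := by positivity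
        rw [← hA]
        field_simp
        ring
      rw [mistakes]
      rw [Finset.sum_congr rfl fun t _ => hterm t,
        Fin.sum_univ_eq_sum_range (fun i => 1 / 2 + (n : ℝ) * (f (i + 1) - f i)) n,
        Finset.sum_add_distrib, Finset.sum_const, Finset.card_range, ← Finset.mul_sum,
        Finset.sum_range_sub f n]
      have hfn : f n = φ y := by
        rw [hf]
        simp only
        rw [pSum_top, mul_div_assoc, div_self h2n, mul_one]
      have hf0 : f 0 = 1 / 2 := by
        rw [hf]
        simp only
        rw [pSum_zero, pow_zero, mul_one, ← unifExp, havg]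
      rw [hfn, hf0, nsmul_eq_mul]
      field_simp
      ring
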